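/- Let (E_j) be a sequence of Banach spaces each having the W.A.P. with a common uniform constant C. Then the ℓ¹-direct sum ℓ¹(E_j) has the W.A.P. -/

import Mathlib

open Filter Topology

/-- A set is weakly compact if it is compact in the weak topology. -/
def IsWeaklyCompact {E : Type*} [NormedAddCommGroup E] [NormedSpace ℝ E] (D : Set E) : Prop :=
  IsCompact (toWeakSpace ℝ E '' D)

/-- An operator is weakly compact if the image of the closed unit ball is relatively
compact in the weak topology. -/
def IsWeaklyCompactOp {E F : Type*} [NormedAddCommGroup E] [NormedSpace ℝ E]
    [NormedAddCommGroup F] [NormedSpace ℝ F] (V : E →L[ℝ] F) : Prop :=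
  IsCompact (closure (toWeakSpace ℝ F '' (V '' Metric.closedBall 0 1)))

/-- `E` has the W.A.P. with constant `C`. -/
def HasWAPWith (E : Type*) [NormedAddCommGroup E] [NormedSpace ℝ E] (C : ℝ) : Prop :=
  ∀ D : Set E, IsWeaklyCompact D → ∀ ε : ℝ, 0 < ε →
    ∃ V : E →L[ℝ] E, IsWeaklyCompactOp V ∧ ‖V‖ ≤ C ∧ ∀ x ∈ D, ‖x - V x‖ < ε

instance : Fact ((1 : ENNReal) ≤ 1) := ⟨le_rfl⟩

/-!
Weakly compact subsets `D` of `ℓ¹(E)` have uniformly small tails. Otherwise there are `z N ∈ D`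
with mass `≥ ε` beyond `N`; let `x₀` be a weak cluster point of `z`. A gliding hump extracts terms
`z (n k)` whose mass sits essentially on disjoint blocks `[n k, b k)`, each close to `x₀` on the
norming functionals `g i` of the earlier blocks. The functional `f = ∑ₖ g k` then has norm `≤ 1`,
is large on every hump, but is small at a weak cluster point of the humps, since there it is
governed by the values of the `g i` at `x₀`, whose total is bounded by the small tail of `x₀`.

Once the tail beyond `N` is below `ε / 2` on `D`, the W.A.P. approximations `V j` of the coordinate
projections of `D` assemble into `x ↦ (V 0 (x 0), …, V (N - 1) (x (N - 1)), 0, …)`, which is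
weakly compact, has norm `≤ C`, and moves the points of `D` by less than `ε`.
-/

section WeakTopology

variable {Y F : Type*} [NormedAddCommGroup Y] [NormedSpace ℝ Y]
  [NormedAddCommGroup F] [NormedSpace ℝ F]

theorem continuous_apply_toWeakSpace_symm (ℓ : StrongDual ℝ Y) :
    Continuous fun z : WeakSpace ℝ Y => ℓ ((toWeakSpace ℝ Y).symm z) :=
  WeakBilin.eval_continuous (topDualPairing ℝ Y).flip ℓ

theorem IsWeaklyCompact.image {D : Set Y} (hD : IsWeaklyCompact D) (T : Y →L[ℝ] F) :
    IsWeaklyCompact (T '' D) := by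
  have h := IsCompact.image hD (WeakSpace.map T).continuous
  rw [Set.image_image] at h
  rwa [IsWeaklyCompact, Set.image_image]

theorem HasWAPWith.nonneg {C : ℝ} (h : HasWAPWith Y C) : 0 ≤ C := by
  obtain ⟨V, -, hV, -⟩ := h ∅ (by simp [IsWeaklyCompact]) 1 one_pos
  exact (norm_nonneg V).trans hV

def IsWeakClusterPt (x₀ : Y) (x : ℕ → Y) : Prop :=
  MapClusterPt (toWeakSpace ℝ Y x₀) atTop (toWeakSpace ℝ Y ∘ x)

theorem IsWeaklyCompact.exists_isWeakClusterPt {D : Set Y} (hD : IsWeaklyCompact D)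
    {x : ℕ → Y} (hx : ∀ n, x n ∈ D) : ∃ x₀ ∈ D, IsWeakClusterPt x₀ x := by
  obtain ⟨w, ⟨x₀, hx₀, rfl⟩, hw⟩ :=
    hD.exists_mapClusterPt (f := atTop) (u := toWeakSpace ℝ Y ∘ x)
      (tendsto_principal.2 (.of_forall fun n => ⟨x n, hx n, rfl⟩))
  exact ⟨x₀, hx₀, hw⟩

theorem IsWeakClusterPt.apply_mem {x₀ : Y} {x : ℕ → Y} (h : IsWeakClusterPt x₀ x)
    (ℓ : StrongDual ℝ Y) {S : Set ℝ} (hS : IsClosed S) (hx : ∀ᶠ n in atTop, ℓ (x n) ∈ S) :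
    ℓ x₀ ∈ S := by
  by_contra hx₀
  have hU : {z | ℓ ((toWeakSpace ℝ Y).symm z) ∈ Sᶜ} ∈ 𝓝 (toWeakSpace ℝ Y x₀) :=
    (continuous_apply_toWeakSpace_symm ℓ).continuousAt.preimage_mem_nhds
      (hS.isOpen_compl.mem_nhds hx₀)
  obtain ⟨n, hn, hn'⟩ := ((mapClusterPt_iff_frequently.1 h _ hU).and_eventually hx).exists
  exact hn hn'

theorem IsWeakClusterPt.frequently_forall_abs_sub_lt {x₀ : Y} {x : ℕ → Y}
    (h : IsWeakClusterPt x₀ x) {ι : Type*} (s : Finset ι) (ℓ : ι → StrongDual ℝ Y)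
    {η : ι → ℝ} (hη : ∀ i ∈ s, 0 < η i) :
    ∃ᶠ n in atTop, ∀ i ∈ s, |ℓ i (x n) - ℓ i x₀| < η i := by
  have hU : ∀ i ∈ s, {z | |ℓ i ((toWeakSpace ℝ Y).symm z) - ℓ i x₀| < η i} ∈
      𝓝 (toWeakSpace ℝ Y x₀) := fun i hi =>
    (((continuous_apply_toWeakSpace_symm (ℓ i)).sub continuous_const).abs.continuousAt
      ).preimage_mem_nhds (Iio_mem_nhds (by simpa using hη i hi))
  exact mapClusterPt_iff_frequently.1 h _ ((Finset.iInter_mem_sets s).2 hU) |>.mono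
    fun n hn => by simpa using hn

end WeakTopology

section WeaklyCompactOperator

open Pointwise

variable {Y F G : Type*} [NormedAddCommGroup Y] [NormedSpace ℝ Y]
  [NormedAddCommGroup F] [NormedSpace ℝ F] [NormedAddCommGroup G] [NormedSpace ℝ G]

theorem IsWeaklyCompactOp.of_mapsTo_isCompact {V : Y →L[ℝ] F} {K : Set (WeakSpace ℝ F)}
    (hK : IsCompact K) (hV : Set.MapsTo (toWeakSpace ℝ F ∘ V) (Metric.closedBall 0 1) K) :
    IsWeaklyCompactOp V := by
  refine hK.of_isClosed_subset isClosed_closure (closure_minimal ?_ hK.isClosed)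
  rintro - ⟨-, ⟨x, hx, rfl⟩, rfl⟩
  exact hV hx

theorem IsWeaklyCompactOp.zero : IsWeaklyCompactOp (0 : Y →L[ℝ] F) :=
  .of_mapsTo_isCompact (K := {0}) isCompact_singleton fun _ _ => by simp

theorem IsWeaklyCompactOp.add {V W : Y →L[ℝ] F} (hV : IsWeaklyCompactOp V)
    (hW : IsWeaklyCompactOp W) : IsWeaklyCompactOp (V + W) :=
  .of_mapsTo_isCompact (IsCompact.add hV hW) fun x hx =>
    Set.add_mem_add (subset_closure ⟨V x, ⟨x, hx, rfl⟩, rfl⟩)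
      (subset_closure ⟨W x, ⟨x, hx, rfl⟩, rfl⟩)

theorem IsWeaklyCompactOp.sum {ι : Type*} (s : Finset ι) {V : ι → Y →L[ℝ] F}
    (hV : ∀ i ∈ s, IsWeaklyCompactOp (V i)) : IsWeaklyCompactOp (∑ i ∈ s, V i) :=
  Finset.sum_induction _ _ (fun _ _ => .add) .zero hV

theorem IsWeaklyCompactOp.clm_comp (T : F →L[ℝ] G) {V : Y →L[ℝ] F}
    (hV : IsWeaklyCompactOp V) : IsWeaklyCompactOp (T.comp V) :=
  .of_mapsTo_isCompact (hV.image (WeakSpace.map T).continuous) fun x hx =>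
    ⟨_, subset_closure ⟨V x, ⟨x, hx, rfl⟩, rfl⟩, rfl⟩

-- `S x = ‖S‖ • (‖S‖⁻¹ • S x)` also when `S = 0`, so `V ∘ S` maps the unit ball into
-- `‖S‖ • closure (V '' closedBall 0 1)`.
theorem IsWeaklyCompactOp.comp_clm {V : Y →L[ℝ] F} (hV : IsWeaklyCompactOp V)
    (S : G →L[ℝ] Y) : IsWeaklyCompactOp (V.comp S) := by
  refine .of_mapsTo_isCompact (hV.image (continuous_const_smul ‖S‖)) fun x hx =>
    ⟨toWeakSpace ℝ F (V (‖S‖⁻¹ • S x)), subset_closure ⟨_, ⟨_, ?_, rfl⟩, rfl⟩, ?_⟩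
  · rw [mem_closedBall_zero_iff, norm_smul, norm_inv, norm_norm]
    exact inv_mul_le_one_of_le₀ ((S.le_opNorm x).trans
      (mul_le_of_le_one_right (norm_nonneg S) (mem_closedBall_zero_iff.1 hx))) (norm_nonneg S)
  · rcases eq_or_ne ‖S‖ 0 with hS | hS
    · simp [norm_eq_zero.1 hS]
    · simp only [map_smul, smul_inv_smul₀ hS, Function.comp_apply,
        ContinuousLinearMap.comp_apply]

end WeaklyCompactOperator

theorem sum_range_abs_le_of_abs_le_sub_succ {u t : ℕ → ℝ} (h : ∀ k, |u k| ≤ t k - t (k + 1))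
    {m : ℕ} (hm : 0 ≤ t m) : ∑ k ∈ Finset.range m, |u k| ≤ t 0 := by
  calc ∑ k ∈ Finset.range m, |u k| ≤ ∑ k ∈ Finset.range m, (t k - t (k + 1)) :=
        Finset.sum_le_sum fun k _ => h k
    _ ≤ t 0 := by rw [Finset.sum_range_sub']; linarith

theorem summable_of_abs_le_sub_succ {u t : ℕ → ℝ} (ht : ∀ k, 0 ≤ t k)
    (h : ∀ k, |u k| ≤ t k - t (k + 1)) : Summable u :=
  .of_abs <| summable_of_sum_range_le (fun _ => abs_nonneg _) fun m =>
    sum_range_abs_le_of_abs_le_sub_succ h (ht m)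

theorem abs_tsum_le_of_abs_le_sub_succ {u t : ℕ → ℝ} (ht : ∀ k, 0 ≤ t k)
    (h : ∀ k, |u k| ≤ t k - t (k + 1)) : |∑' k, u k| ≤ t 0 := by
  rw [← Real.norm_eq_abs]
  exact (norm_tsum_le_tsum_norm (summable_of_abs_le_sub_succ ht h).norm).trans <|
    Real.tsum_le_of_sum_range_le (fun k => norm_nonneg _) fun m =>
      sum_range_abs_le_of_abs_le_sub_succ h (ht m)

theorem abs_sum_range_le_of_abs_sub_le_geometric {u w t : ℕ → ℝ} {δ : ℝ} {m : ℕ}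
    (hw : ∀ k, |w k| ≤ t k - t (k + 1)) (hm : 0 ≤ t m) (hδ : 0 ≤ δ)
    (huw : ∀ k < m, |u k - w k| ≤ δ * (1 / 2) ^ k) :
    |∑ k ∈ Finset.range m, u k| ≤ t 0 + 2 * δ := by
  have hgeom : ∑ k ∈ Finset.range m, δ * (1 / 2) ^ k ≤ 2 * δ := by
    rw [← Finset.mul_sum]; nlinarith [sum_geometric_two_le m]
  calc |∑ k ∈ Finset.range m, u k| ≤ ∑ k ∈ Finset.range m, (|w k| + δ * (1 / 2) ^ k) :=
        (Finset.abs_sum_le_sum_abs _ _).trans <| Finset.sum_le_sum fun k hk => by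
          linarith [abs_sub_abs_le_abs_sub (u k) (w k), huw k (Finset.mem_range.1 hk)]
    _ ≤ t 0 + 2 * δ := by
      rw [Finset.sum_add_distrib]
      linarith [sum_range_abs_le_of_abs_le_sub_succ hw hm]

section LOne

variable {E : ℕ → Type*} [∀ j, NormedAddCommGroup (E j)]

theorem lp.hasSum_norm_one (x : lp E 1) : HasSum (fun j => ‖x j‖) ‖x‖ := by
  simpa using lp.hasSum_norm (p := 1) (by norm_num) x

noncomputable def tailNorm (x : lp E 1) (N : ℕ) : ℝ := ∑' j, ‖x (j + N)‖

theorem sum_range_add_tailNorm (x : lp E 1) (N : ℕ) :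
    ∑ j ∈ Finset.range N, ‖x j‖ + tailNorm x N = ‖x‖ := by
  rw [tailNorm, (lp.hasSum_norm_one x).summable.sum_add_tsum_nat_add N,
    (lp.hasSum_norm_one x).tsum_eq]

theorem tailNorm_nonneg (x : lp E 1) (N : ℕ) : 0 ≤ tailNorm x N :=
  tsum_nonneg fun _ => norm_nonneg _

theorem tailNorm_zero (x : lp E 1) : tailNorm x 0 = ‖x‖ := by
  simpa using sum_range_add_tailNorm x 0

theorem sum_Ico_eq_tailNorm_sub (x : lp E 1) {M N : ℕ} (h : M ≤ N) :
    ∑ j ∈ Finset.Ico M N, ‖x j‖ = tailNorm x M - tailNorm x N := by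
  rw [Finset.sum_Ico_eq_sub _ h]
  linarith [sum_range_add_tailNorm x M, sum_range_add_tailNorm x N]

theorem tailNorm_antitone (x : lp E 1) : Antitone (tailNorm x) := fun M N h => by
  linarith [sum_Ico_eq_tailNorm_sub x h,
    Finset.sum_nonneg fun j (_ : j ∈ Finset.Ico M N) => norm_nonneg (x j)]

theorem tailNorm_le_norm (x : lp E 1) (N : ℕ) : tailNorm x N ≤ ‖x‖ :=
  tailNorm_zero x ▸ tailNorm_antitone x (Nat.zero_le N)

theorem tendsto_tailNorm (x : lp E 1) : Tendsto (tailNorm x) atTop (𝓝 0) :=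
  tendsto_sum_nat_add fun j => ‖x j‖

theorem norm_sub_sum_single_eq_tailNorm (x : lp E 1) (N : ℕ) :
    ‖x - ∑ j ∈ Finset.range N, lp.single 1 j (x j)‖ = tailNorm x N := by
  have h := lp.norm_compl_sum_single (p := 1) (by norm_num) x (Finset.range N)
  simp only [ENNReal.toReal_one, Real.rpow_one] at h
  linarith [sum_range_add_tailNorm x N]

variable [∀ j, NormedSpace ℝ (E j)]

theorem exists_abs_sub_sum_range_le_tailNorm (g : ℕ → StrongDual ℝ (lp E 1)) (s : ℕ → ℕ)
    (hg : ∀ k x, |g k x| ≤ tailNorm x (s k) - tailNorm x (s (k + 1))) :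
    ∃ f : StrongDual ℝ (lp E 1), ∀ x m,
      |f x - ∑ k ∈ Finset.range m, g k x| ≤ tailNorm x (s m) := by
  have hsum x : Summable fun k => g k x :=
    summable_of_abs_le_sub_succ (fun k => tailNorm_nonneg x (s k)) (hg · x)
  have htail x m : |∑' k, g (k + m) x| ≤ tailNorm x (s m) := by
    simpa using abs_tsum_le_of_abs_le_sub_succ (fun k => tailNorm_nonneg x (s (k + m)))
      fun k => by simpa [add_right_comm k 1 m] using hg (k + m) x
  let f : lp E 1 →ₗ[ℝ] ℝ :=
    { toFun x := ∑' k, g k x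
      map_add' x y := by simp only [map_add, (hsum x).tsum_add (hsum y)]
      map_smul' c x := by simp only [map_smul, smul_eq_mul, tsum_mul_left, RingHom.id_apply] }
  refine ⟨f.mkContinuous 1 fun x => ?_, fun x m => ?_⟩
  · calc ‖∑' k, g k x‖ ≤ tailNorm x (s 0) := by simpa using htail x 0
      _ ≤ 1 * ‖x‖ := by rw [one_mul]; exact tailNorm_le_norm x (s 0)
  · change |∑' k, g k x - _| ≤ _
    rw [← (hsum x).sum_add_tsum_nat_add m, add_sub_cancel_left]
    exact htail x m

noncomputable def blockNorming (y : lp E 1) (s : Finset ℕ) : StrongDual ℝ (lp E 1) :=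
  ∑ j ∈ s, (exists_dual_vector'' ℝ (y j)).choose.comp (lp.evalCLM ℝ E 1 j)

theorem abs_blockNorming_apply_le (y : lp E 1) (s : Finset ℕ) (x : lp E 1) :
    |blockNorming y s x| ≤ ∑ j ∈ s, ‖x j‖ := by
  rw [blockNorming, sum_apply]
  refine (Finset.abs_sum_le_sum_abs _ _).trans (Finset.sum_le_sum fun j _ => ?_)
  have hψ := (exists_dual_vector'' ℝ (y j)).choose_spec.1
  exact (ContinuousLinearMap.le_of_opNorm_le _ hψ (x j)).trans_eq (one_mul _)

theorem blockNorming_apply_self (y : lp E 1) (s : Finset ℕ) :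
    blockNorming y s y = ∑ j ∈ s, ‖y j‖ :=
  (sum_apply _ _ _).trans <|
    Finset.sum_congr rfl fun j _ => (exists_dual_vector'' ℝ (y j)).choose_spec.2

theorem abs_blockNorming_Ico_apply_le (y : lp E 1) {a b c : ℕ} (hab : a ≤ b) (hbc : b ≤ c)
    (x : lp E 1) : |blockNorming y (Finset.Ico a b) x| ≤ tailNorm x a - tailNorm x c := by
  refine (abs_blockNorming_apply_le y _ x).trans ?_
  rw [sum_Ico_eq_tailNorm_sub x hab]
  linarith [tailNorm_antitone x hbc]

theorem blockNorming_Ico_apply_self (y : lp E 1) {a b : ℕ} (hab : a ≤ b) :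
    blockNorming y (Finset.Ico a b) y = tailNorm y a - tailNorm y b :=
  (blockNorming_apply_self y _).trans (sum_Ico_eq_tailNorm_sub y hab)

end LOne

section GlidingHump

variable {E : ℕ → Type*} [∀ j, NormedAddCommGroup (E j)] [∀ j, NormedSpace ℝ (E j)]

theorem IsWeakClusterPt.exists_gliding_hump {z : ℕ → lp E 1} {x₀ : lp E 1}
    (hx₀ : IsWeakClusterPt x₀ z) {δ : ℝ} (hδ : 0 < δ) (N₀ : ℕ) :
    ∃ n b : ℕ → ℕ, N₀ ≤ n 0 ∧ (∀ k, n k < b k ∧ b k ≤ n (k + 1)) ∧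
      (∀ k, tailNorm (z (n k)) (b k) < δ) ∧
      ∀ i k, i < k → |blockNorming (z (n i)) (Finset.Ico (n i) (b i)) (z (n k)) -
        blockNorming (z (n i)) (Finset.Ico (n i) (b i)) x₀| < δ * (1 / 2) ^ i := by
  classical
  set g : ℕ × ℕ → StrongDual ℝ (lp E 1) := fun p => blockNorming (z p.1) (Finset.Ico p.1 p.2)
  obtain ⟨p, hP, hr⟩ := exists_seq_of_forall_finset_exists
    (fun p : ℕ × ℕ => N₀ ≤ p.1 ∧ p.1 < p.2 ∧ tailNorm (z p.1) p.2 < δ)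
    (fun p q => p.2 ≤ q.1 ∧ |g p (z q.1) - g p x₀| < δ * (1 / 2) ^ p.1) fun s _ => by
      obtain ⟨n, hclose, hn⟩ := ((hx₀.frequently_forall_abs_sub_lt s g
        (η := fun p => δ * (1 / 2) ^ p.1) fun _ _ => by positivity).and_eventually
        (eventually_ge_atTop (max N₀ (s.sup Prod.snd)))).exists
      obtain ⟨b, hb, hnb⟩ := (((tendsto_tailNorm (z n)).eventually (gt_mem_nhds hδ)).and
        (eventually_gt_atTop n)).exists
      exact ⟨(n, b), ⟨le_of_max_le_left hn, hnb, hb⟩,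
        fun p hp => ⟨(Finset.le_sup hp).trans (le_of_max_le_right hn), hclose p hp⟩⟩
  have hnb k : (p k).1 < (p k).2 ∧ (p k).2 ≤ (p (k + 1)).1 :=
    ⟨(hP k).2.1, (hr k (k + 1) k.lt_succ_self).1⟩
  have hn : StrictMono fun k => (p k).1 :=
    strictMono_nat_of_lt_succ fun k => (hnb k).1.trans_le (hnb k).2
  refine ⟨fun k => (p k).1, fun k => (p k).2, (hP 0).1, hnb, fun k => (hP k).2.2,
    fun i k hik => (hr i k hik).2.trans_le ?_⟩
  exact mul_le_mul_of_nonneg_left (pow_le_pow_of_le_one (by norm_num) (by norm_num) (hn.id_le i))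
    hδ.le

theorem IsWeaklyCompact.exists_forall_tailNorm_lt {D : Set (lp E 1)} (hD : IsWeaklyCompact D)
    {ε : ℝ} (hε : 0 < ε) : ∃ N, ∀ x ∈ D, tailNorm x N < ε := by
  by_contra! hbad
  choose z hzD hz using hbad
  obtain ⟨x₀, -, hx₀⟩ := hD.exists_isWeakClusterPt hzD
  set δ := ε / 9 with hδ_def
  have hδ : 0 < δ := by positivity
  obtain ⟨N₀, hN₀⟩ := ((tendsto_tailNorm x₀).eventually (gt_mem_nhds hδ)).exists
  obtain ⟨n, b, hN₀n, hnb, hb, hclose⟩ := hx₀.exists_gliding_hump hδ N₀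
  set g : ℕ → StrongDual ℝ (lp E 1) := fun k => blockNorming (z (n k)) (Finset.Ico (n k) (b k))
  have hg k x : |g k x| ≤ tailNorm x (n k) - tailNorm x (n (k + 1)) :=
    abs_blockNorming_Ico_apply_le _ (hnb k).1.le (hnb k).2 x
  -- the gliding hump functional `f = ∑ₖ g k`
  obtain ⟨f, hf⟩ := exists_abs_sub_sum_range_le_tailNorm g n hg
  have hsmall m v (hv : ∀ i < m, |g i v - g i x₀| ≤ δ * (1 / 2) ^ i) :
      |∑ i ∈ Finset.range m, g i v| ≤ 3 * δ := by
    have := abs_sum_range_le_of_abs_sub_le_geometric (hg · x₀) (tailNorm_nonneg x₀ _) hδ.le hv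
    linarith [tailNorm_antitone x₀ hN₀n]
  have hfz k : ε - 5 * δ ≤ f (z (n k)) := by
    have hgk : g k (z (n k)) = tailNorm (z (n k)) (n k) - tailNorm (z (n k)) (b k) :=
      blockNorming_Ico_apply_self _ (hnb k).1.le
    have hfk := hf (z (n k)) (k + 1)
    rw [Finset.sum_range_succ, hgk] at hfk
    linarith [abs_le.1 hfk, abs_le.1 (hsmall k (z (n k)) fun i hi => (hclose i k hi).le),
      hz (n k), hb k, tailNorm_antitone (z (n k)) (hnb k).2]
  obtain ⟨y, -, hy⟩ := hD.exists_isWeakClusterPt fun k => hzD (n k)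
  have hfy : ε - 5 * δ ≤ f y := hy.apply_mem f isClosed_Ici (.of_forall hfz)
  have hgy i : |g i y - g i x₀| ≤ δ * (1 / 2) ^ i := by
    simpa [Real.dist_eq] using hy.apply_mem (g i) Metric.isClosed_closedBall
      ((eventually_gt_atTop i).mono fun k hk => by
        simpa [Real.dist_eq] using (hclose i k hk).le)
  have hfy_le m : f y ≤ 3 * δ + tailNorm y (n m) := by
    linarith [abs_le.1 (hf y m), abs_le.1 (hsmall m y fun i _ => hgy i)]
  have hn : Tendsto n atTop atTop :=
    (strictMono_nat_of_lt_succ fun k => (hnb k).1.trans_le (hnb k).2).tendsto_atTop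
  have hlim : Tendsto (fun m => 3 * δ + tailNorm y (n m)) atTop (𝓝 (3 * δ)) := by
    simpa using tendsto_const_nhds.add ((tendsto_tailNorm y).comp hn)
  linarith [ge_of_tendsto' hlim hfy_le]

end GlidingHump

section Truncation

variable {E : ℕ → Type*} [∀ j, NormedAddCommGroup (E j)] [∀ j, NormedSpace ℝ (E j)]

noncomputable def truncDiag (V : ∀ j, E j →L[ℝ] E j) (N : ℕ) : lp E 1 →L[ℝ] lp E 1 :=
  ∑ j ∈ Finset.range N,
    (lp.singleContinuousLinearMap ℝ E 1 j).comp ((V j).comp (lp.evalCLM ℝ E 1 j))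

theorem truncDiag_apply (V : ∀ j, E j →L[ℝ] E j) (N : ℕ) (x : lp E 1) :
    truncDiag V N x = ∑ j ∈ Finset.range N, lp.single 1 j (V j (x j)) := by
  simp [truncDiag, sum_apply, lp.evalCLM]

theorem isWeaklyCompactOp_truncDiag {V : ∀ j, E j →L[ℝ] E j}
    (hV : ∀ j, IsWeaklyCompactOp (V j)) (N : ℕ) : IsWeaklyCompactOp (truncDiag V N) :=
  .sum _ fun j _ => ((hV j).comp_clm _).clm_comp _

theorem norm_truncDiag_le {V : ∀ j, E j →L[ℝ] E j} {C : ℝ} (hC : 0 ≤ C)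
    (hV : ∀ j, ‖V j‖ ≤ C) (N : ℕ) : ‖truncDiag V N‖ ≤ C := by
  refine ContinuousLinearMap.opNorm_le_bound _ hC fun x => ?_
  calc ‖truncDiag V N x‖ ≤ ∑ j ∈ Finset.range N, ‖V j (x j)‖ := by
        rw [truncDiag_apply]
        exact (norm_sum_le _ _).trans_eq
          (Finset.sum_congr rfl fun j _ => lp.norm_single (by norm_num) _ _)
    _ ≤ ∑ j ∈ Finset.range N, C * ‖x j‖ :=
        Finset.sum_le_sum fun j _ => (V j).le_of_opNorm_le (hV j) _
    _ ≤ C * ‖x‖ := by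
        rw [← Finset.mul_sum]
        exact mul_le_mul_of_nonneg_left
          (by linarith [sum_range_add_tailNorm x N, tailNorm_nonneg x N]) hC

theorem norm_sub_truncDiag_le (V : ∀ j, E j →L[ℝ] E j) (N : ℕ) (x : lp E 1) :
    ‖x - truncDiag V N x‖ ≤ ∑ j ∈ Finset.range N, ‖x j - V j (x j)‖ + tailNorm x N := by
  have hsplit : x - truncDiag V N x = ∑ j ∈ Finset.range N, lp.single 1 j (x j - V j (x j)) +
      (x - ∑ j ∈ Finset.range N, lp.single 1 j (x j)) := by
    simp only [truncDiag_apply, lp.single_sub, Finset.sum_sub_distrib]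
    abel
  rw [hsplit, ← norm_sub_sum_single_eq_tailNorm]
  refine (norm_add_le _ _).trans ?_
  gcongr
  exact (norm_sum_le _ _).trans_eq
    (Finset.sum_congr rfl fun j _ => lp.norm_single (by norm_num) _ _)

end Truncation

theorem stmt_5_general {E : ℕ → Type*} [∀ j, NormedAddCommGroup (E j)] [∀ j, NormedSpace ℝ (E j)]
    (C : ℝ) (hC : ∀ j, HasWAPWith (E j) C) :
    ∃ C' : ℝ, HasWAPWith (lp E 1) C' := by
  refine ⟨C, fun D hD ε hε => ?_⟩
  obtain ⟨N, hN⟩ := hD.exists_forall_tailNorm_lt (half_pos hε)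
  set η := ε / (2 * (N + 1)) with hη_def
  have hη : 0 < η := by positivity
  choose V hVwc hVnorm hVapprox using fun j => hC j _ (hD.image (lp.evalCLM ℝ E 1 j)) η hη
  refine ⟨truncDiag V N, isWeaklyCompactOp_truncDiag hVwc N,
    norm_truncDiag_le (hC 0).nonneg hVnorm N, fun x hx => ?_⟩
  have hhead : ∑ j ∈ Finset.range N, ‖x j - V j (x j)‖ ≤ N * η := by
    simpa using Finset.sum_le_sum fun j (_ : j ∈ Finset.range N) =>
      (hVapprox j (x j) ⟨x, hx, rfl⟩).le
  have hNη : N * η ≤ ε / 2 := by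
    rw [hη_def, mul_div_assoc', div_le_div_iff₀ (by positivity) two_pos]
    nlinarith
  linarith [norm_sub_truncDiag_le V N x, hN x hx]

/-- If each `E_j` has the W.A.P. with a common uniform constant `C`, then the `ℓ¹`-direct
sum `ℓ¹(E_j)` has the W.A.P. -/
theorem stmt_5 {E : ℕ → Type*} [∀ j, NormedAddCommGroup (E j)] [∀ j, NormedSpace ℝ (E j)]
    [∀ j, CompleteSpace (E j)]
    (C : ℝ) (hC : ∀ j, HasWAPWith (E j) C) :
    ∃ C' : ℝ, HasWAPWith (lp E 1) C' :=
  stmt_5_general C hC
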